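/- For all integers n ≥ d ≥ 0, there exists a d-degenerate finite simple graph G with n vertices that contains a clique of cardinality d and has exactly 2^d·(n − d + 1) cliques. -/

import Mathlib

/-!
Take the complete split graph on `n` vertices whose clique part `K` has `d` vertices: `K` is a
clique, its complement is independent, and every vertex of `K` is adjacent to every vertex outside
`K`. A vertex outside `K` (or any vertex, if the set considered lies inside `K`) has all its
neighbours in `K`, which gives `d`-degeneracy. A set of vertices is a clique exactly when it has
at most one vertex outside `K`, so a clique is an arbitrary subset of `K` together with at most one
of the `n - d` other vertices: `2^d · (n - d + 1)` cliques.
-/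

/-- The number of cliques (sets of pairwise adjacent vertices, including the
empty clique) of a graph. -/
noncomputable def cliqueCount {V : Type*} (G : SimpleGraph V) : ℕ :=
  Nat.card {s : Finset V // G.IsClique (s : Set V)}

/-- A graph is `d`-degenerate if every nonempty set of vertices contains a
vertex with at most `d` neighbours in that set. -/
def IsDegenerate {V : Type*} (G : SimpleGraph V) (d : ℕ) : Prop :=
  ∀ S : Finset V, S.Nonempty → ∃ v ∈ S, Nat.card {u ∈ (S : Set V) | G.Adj v u} ≤ d

open Finset SimpleGraph

variable {V : Type*}

def completeSplitGraph (K : Set V) : SimpleGraph V :=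
  fromRel fun u _ => u ∈ K

@[simp]
lemma completeSplitGraph_adj {K : Set V} {u v : V} :
    (completeSplitGraph K).Adj u v ↔ u ≠ v ∧ (u ∈ K ∨ v ∈ K) :=
  fromRel_adj _ u v

lemma isDegenerate_completeSplitGraph (K : Finset V) :
    IsDegenerate (completeSplitGraph (K : Set V)) #K := by
  intro S ⟨w, hw⟩
  obtain ⟨v, hvS, hvK⟩ : ∃ v ∈ S, v ∉ K ∨ (S : Set V) ⊆ K := by
    by_cases hSK : (S : Set V) ⊆ K
    · exact ⟨w, hw, .inr hSK⟩
    · obtain ⟨v, hvS, hvK⟩ := Set.not_subset.1 hSK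
      exact ⟨v, hvS, .inl hvK⟩
  refine ⟨v, hvS, ?_⟩
  have hsub : {u ∈ (S : Set V) | (completeSplitGraph (K : Set V)).Adj v u} ⊆ K := by
    rintro u ⟨huS, huv⟩
    rw [completeSplitGraph_adj] at huv
    rcases hvK with hvK | hSK
    · exact huv.2.resolve_left hvK
    · exact hSK huS
  calc Nat.card {u ∈ (S : Set V) | (completeSplitGraph (K : Set V)).Adj v u}
      ≤ Nat.card (K : Set V) := Nat.card_mono K.finite_toSet hsub
    _ = #K := by rw [Nat.card_coe_set_eq, Set.ncard_coe_finset]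

lemma cliqueCount_eq_card_filter [Fintype V] (G : SimpleGraph V)
    [DecidablePred fun s : Finset V => G.IsClique (s : Set V)] :
    cliqueCount G = #{s : Finset V | G.IsClique (s : Set V)} := by
  rw [cliqueCount, Nat.card_eq_fintype_card, Fintype.card_subtype]

section DecidableEq

variable [DecidableEq V]

lemma card_filter_powerset_card_le_one (s : Finset V) :
    #{t ∈ s.powerset | #t ≤ 1} = #s + 1 := by
  have hsets : {t ∈ s.powerset | #t ≤ 1} = insert ∅ (s.map ⟨singleton, singleton_injective⟩) := by
    ext t
    simp only [mem_filter, mem_powerset, mem_insert, mem_map, Function.Embedding.coeFn_mk]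
    constructor
    · rintro ⟨hts, ht⟩
      obtain h0 | h1 : #t = 0 ∨ #t = 1 := by omega
      · exact .inl (card_eq_zero.1 h0)
      · obtain ⟨a, rfl⟩ := card_eq_one.1 h1
        exact .inr ⟨a, singleton_subset_iff.1 hts, rfl⟩
    · rintro (rfl | ⟨a, ha, rfl⟩) <;> simp_all
  rw [hsets, card_insert_of_notMem (by simp), card_map]

lemma card_filter_card_sdiff_le_one [Fintype V] (K : Finset V) :
    #{s : Finset V | #(s \ K) ≤ 1} = 2 ^ #K * (#Kᶜ + 1) := by
  have hsplit : ∀ A B : Finset V, A ⊆ K → B ⊆ Kᶜ → (A ∪ B) ∩ K = A ∧ (A ∪ B) \ K = B := by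
    intro A B hA hB
    constructor <;> ext x <;> grind [mem_compl]
  calc #{s : Finset V | #(s \ K) ≤ 1}
      = #(K.powerset ×ˢ {t ∈ Kᶜ.powerset | #t ≤ 1}) := by
        refine card_nbij' (fun s => (s ∩ K, s \ K)) (fun p => p.1 ∪ p.2) ?_ ?_ ?_ ?_
        · intro s hs
          simp_all [subset_iff]
        · rintro ⟨A, B⟩ hp
          simp only [mem_coe, mem_product, mem_powerset, mem_filter] at hp
          simp [(hsplit A B hp.1 hp.2.1).2, hp.2.2]
        · intro s _
          exact sup_inf_sdiff s K
        · rintro ⟨A, B⟩ hp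
          simp only [mem_coe, mem_product, mem_powerset, mem_filter] at hp
          simp [hsplit A B hp.1 hp.2.1]
    _ = 2 ^ #K * (#Kᶜ + 1) := by
        rw [card_product, card_powerset, card_filter_powerset_card_le_one]

variable {K : Finset V}

lemma completeSplitGraph_isClique_iff {s : Finset V} :
    (completeSplitGraph (K : Set V)).IsClique (s : Set V) ↔ #(s \ K) ≤ 1 := by
  simp only [isClique_iff, Set.Pairwise, mem_coe, completeSplitGraph_adj, card_le_one, mem_sdiff]
  grind

lemma completeSplitGraph_isNClique : (completeSplitGraph (K : Set V)).IsNClique #K K := by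
  simp [isNClique_iff, completeSplitGraph_isClique_iff]

lemma cliqueCount_completeSplitGraph [Fintype V] :
    cliqueCount (completeSplitGraph (K : Set V)) = 2 ^ #K * (#Kᶜ + 1) := by
  classical
  rw [cliqueCount_eq_card_filter]
  simp only [completeSplitGraph_isClique_iff]
  exact card_filter_card_sdiff_le_one K

end DecidableEq

/-- For all `n ≥ d ≥ 0` there is a `d`-degenerate graph with `n` vertices
containing a `d`-clique and having exactly `2^d·(n - d + 1)` cliques. -/
theorem clique_count_degenerate_exists (n d : ℕ) (hdn : d ≤ n) :
    ∃ G : SimpleGraph (Fin n), IsDegenerate G d ∧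
      (∃ s : Finset (Fin n), G.IsNClique d s) ∧
      cliqueCount G = 2 ^ d * (n - d + 1) := by
  set K : Finset (Fin n) := {i | (i : ℕ) < d}
  have hK : #K = d := by rw [Fin.card_filter_val_lt, min_eq_right hdn]
  have hKc : #Kᶜ = n - d := by rw [card_compl, Fintype.card_fin, hK]
  refine ⟨completeSplitGraph (K : Set (Fin n)), ?_, ⟨K, ?_⟩, ?_⟩
  · exact hK ▸ isDegenerate_completeSplitGraph K
  · exact hK ▸ completeSplitGraph_isNClique
  · rw [cliqueCount_completeSplitGraph, hK, hKc]
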